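/- (Soundness of monotone/antitone variable elimination) Let α(p) be a hybrid formula in which every occurrence of p is negative and β(p) one in which every occurrence of p is positive (in the sense of signed generation trees). Then a Kripke frame F validates α(p) ≤ β(p) iff F validates α(⊥) ≤ β(⊥). -/
import Mathlib


inductive Form where
  | prop : ℕ → Form
  | nom : ℕ → Form
  | svar : ℕ → Form
  | bot : Form
  | top : Form
  | neg : Form → Form
  | and : Form → Form → Form
  | or : Form → Form → Form
  | imp : Form → Form → Form
  | box : Form → Form
  | dia : Form → Form
  | atN : ℕ → Form → Form
  | atS : ℕ → Form → Form
  | bind : ℕ → Form → Form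
  | bbox : Form → Form
  | bdia : Form → Form
  | glA : Form → Form
  | glE : Form → Form
  | sall : ℕ → Form → Form
  | sex : ℕ → Form → Form

structure Model (W : Type) where
  R : W → W → Prop
  Vp : ℕ → W → Prop
  Vn : ℕ → W

def upd {W : Type} (g : ℕ → W) (x : ℕ) (w : W) : ℕ → W :=
  fun y => if y = x then w else g y

def sat {W : Type} (M : Model W) : (ℕ → W) → W → Form → Prop
  | _, w, .prop p => M.Vp p w
  | _, w, .nom i => M.Vn i = w
  | g, w, .svar x => g x = w
  | _, _, .bot => False
  | _, _, .top => True
  | g, w, .neg φ => ¬ sat M g w φ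
  | g, w, .and φ ψ => sat M g w φ ∧ sat M g w ψ
  | g, w, .or φ ψ => sat M g w φ ∨ sat M g w ψ
  | g, w, .imp φ ψ => sat M g w φ → sat M g w ψ
  | g, w, .box φ => ∀ v, M.R w v → sat M g v φ
  | g, w, .dia φ => ∃ v, M.R w v ∧ sat M g v φ
  | g, _, .atN i φ => sat M g (M.Vn i) φ
  | g, _, .atS x φ => sat M g (g x) φ
  | g, w, .bind x φ => sat M (upd g x w) w φ
  | g, w, .bbox φ => ∀ v, M.R v w → sat M g v φ
  | g, w, .bdia φ => ∃ v, M.R v w ∧ sat M g v φ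
  | g, _, .glA φ => ∀ v, sat M g v φ
  | g, _, .glE φ => ∃ v, sat M g v φ
  | g, w, .sall x φ => ∀ v, sat M (upd g x v) w φ
  | g, w, .sex x φ => ∃ v, sat M (upd g x v) w φ

/-- The inequality φ ≤ ψ holds in (M,g). -/
def holdsIneq {W : Type} (M : Model W) (g : ℕ → W) (φ ψ : Form) : Prop :=
  ∀ w, sat M g w φ → sat M g w ψ

/-- Frame validity of an inequality. -/
def validIneq {W : Type} (R : W → W → Prop) (φ ψ : Form) : Prop :=
  ∀ (Vp : ℕ → W → Prop) (Vn : ℕ → W) (g : ℕ → W),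
    holdsIneq ⟨R, Vp, Vn⟩ g φ ψ

mutual
/-- Every occurrence of `p` in the formula is positive. -/
inductive PosIn (p : ℕ) : Form → Prop where
  | prop (q : ℕ) : PosIn p (.prop q)
  | nom (i : ℕ) : PosIn p (.nom i)
  | svar (x : ℕ) : PosIn p (.svar x)
  | bot : PosIn p .bot
  | top : PosIn p .top
  | neg {φ} : NegIn p φ → PosIn p (.neg φ)
  | and {φ ψ} : PosIn p φ → PosIn p ψ → PosIn p (.and φ ψ)
  | or {φ ψ} : PosIn p φ → PosIn p ψ → PosIn p (.or φ ψ)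
  | imp {φ ψ} : NegIn p φ → PosIn p ψ → PosIn p (.imp φ ψ)
  | box {φ} : PosIn p φ → PosIn p (.box φ)
  | dia {φ} : PosIn p φ → PosIn p (.dia φ)
  | atN {i φ} : PosIn p φ → PosIn p (.atN i φ)
  | atS {x φ} : PosIn p φ → PosIn p (.atS x φ)
  | bind {x φ} : PosIn p φ → PosIn p (.bind x φ)
  | bbox {φ} : PosIn p φ → PosIn p (.bbox φ)
  | bdia {φ} : PosIn p φ → PosIn p (.bdia φ)
  | glA {φ} : PosIn p φ → PosIn p (.glA φ)
  | glE {φ} : PosIn p φ → PosIn p (.glE φ)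
  | sall {x φ} : PosIn p φ → PosIn p (.sall x φ)
  | sex {x φ} : PosIn p φ → PosIn p (.sex x φ)

/-- Every occurrence of `p` in the formula is negative. -/
inductive NegIn (p : ℕ) : Form → Prop where
  | prop {q : ℕ} : q ≠ p → NegIn p (.prop q)
  | nom (i : ℕ) : NegIn p (.nom i)
  | svar (x : ℕ) : NegIn p (.svar x)
  | bot : NegIn p .bot
  | top : NegIn p .top
  | neg {φ} : PosIn p φ → NegIn p (.neg φ)
  | and {φ ψ} : NegIn p φ → NegIn p ψ → NegIn p (.and φ ψ)
  | or {φ ψ} : NegIn p φ → NegIn p ψ → NegIn p (.or φ ψ)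
  | imp {φ ψ} : PosIn p φ → NegIn p ψ → NegIn p (.imp φ ψ)
  | box {φ} : NegIn p φ → NegIn p (.box φ)
  | dia {φ} : NegIn p φ → NegIn p (.dia φ)
  | atN {i φ} : NegIn p φ → NegIn p (.atN i φ)
  | atS {x φ} : NegIn p φ → NegIn p (.atS x φ)
  | bind {x φ} : NegIn p φ → NegIn p (.bind x φ)
  | bbox {φ} : NegIn p φ → NegIn p (.bbox φ)
  | bdia {φ} : NegIn p φ → NegIn p (.bdia φ)
  | glA {φ} : NegIn p φ → NegIn p (.glA φ)
  | glE {φ} : NegIn p φ → NegIn p (.glE φ)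
  | sall {x φ} : NegIn p φ → NegIn p (.sall x φ)
  | sex {x φ} : NegIn p φ → NegIn p (.sex x φ)
end

/-- Uniform substitution of the formula `α` for the propositional variable `p`. -/
def substProp (p : ℕ) (α : Form) : Form → Form
  | .prop q => if q = p then α else .prop q
  | .nom i => .nom i
  | .svar x => .svar x
  | .bot => .bot
  | .top => .top
  | .neg φ => .neg (substProp p α φ)
  | .and φ ψ => .and (substProp p α φ) (substProp p α ψ)
  | .or φ ψ => .or (substProp p α φ) (substProp p α ψ)
  | .imp φ ψ => .imp (substProp p α φ) (substProp p α ψ)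
  | .box φ => .box (substProp p α φ)
  | .dia φ => .dia (substProp p α φ)
  | .atN i φ => .atN i (substProp p α φ)
  | .atS x φ => .atS x (substProp p α φ)
  | .bind x φ => .bind x (substProp p α φ)
  | .bbox φ => .bbox (substProp p α φ)
  | .bdia φ => .bdia (substProp p α φ)
  | .glA φ => .glA (substProp p α φ)
  | .glE φ => .glE (substProp p α φ)
  | .sall x φ => .sall x (substProp p α φ)
  | .sex x φ => .sex x (substProp p α φ)

lemma sat_substBot {W : Type} (R : W → W → Prop) (Vp : ℕ → W → Prop) (Vn : ℕ → W)
    (p : ℕ) (φ : Form) : ∀ g w,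
    sat ⟨R, Vp, Vn⟩ g w (substProp p .bot φ) ↔
      sat ⟨R, fun q => if q = p then fun _ => False else Vp q, Vn⟩ g w φ := by
  induction φ with
  | prop q =>
    intro g w
    by_cases h : q = p <;> simp [substProp, sat, h]
  | _ =>
    intro g w
    simp_all [substProp, sat]

lemma sat_mono {W : Type} (R : W → W → Prop) (Vp1 Vp2 : ℕ → W → Prop) (Vn : ℕ → W)
    (p : ℕ) (heq : ∀ q, q ≠ p → Vp1 q = Vp2 q) (hle : ∀ w, Vp1 p w → Vp2 p w)
    (φ : Form) : ∀ g w,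
    (PosIn p φ → sat ⟨R, Vp1, Vn⟩ g w φ → sat ⟨R, Vp2, Vn⟩ g w φ) ∧
    (NegIn p φ → sat ⟨R, Vp2, Vn⟩ g w φ → sat ⟨R, Vp1, Vn⟩ g w φ) := by
  induction φ with
  | prop q =>
    intro g w
    constructor
    · intro _ h
      by_cases hq : q = p
      · subst hq; exact hle w h
      · simpa [sat, ← heq q hq] using h
    · intro hn h
      cases hn with
      | prop hq => simpa [sat, heq q hq] using h
  | neg φ ih =>
    intro g w
    refine ⟨fun hp h => ?_, fun hn h => ?_⟩
    · cases hp with | neg h' => exact fun hs => h ((ih g w).2 h' hs)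
    · cases hn with | neg h' => exact fun hs => h ((ih g w).1 h' hs)
  | and φ ψ ih1 ih2 =>
    intro g w
    refine ⟨fun hp h => ?_, fun hn h => ?_⟩
    · cases hp with | and h1 h2 =>
        exact ⟨(ih1 g w).1 h1 h.1, (ih2 g w).1 h2 h.2⟩
    · cases hn with | and h1 h2 =>
        exact ⟨(ih1 g w).2 h1 h.1, (ih2 g w).2 h2 h.2⟩
  | or φ ψ ih1 ih2 =>
    intro g w
    refine ⟨fun hp h => ?_, fun hn h => ?_⟩
    · cases hp with | or h1 h2 =>
        exact h.imp ((ih1 g w).1 h1) ((ih2 g w).1 h2)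
    · cases hn with | or h1 h2 =>
        exact h.imp ((ih1 g w).2 h1) ((ih2 g w).2 h2)
  | imp φ ψ ih1 ih2 =>
    intro g w
    refine ⟨fun hp h hs => ?_, fun hn h hs => ?_⟩
    · cases hp with | imp h1 h2 =>
        exact (ih2 g w).1 h2 (h ((ih1 g w).2 h1 hs))
    · cases hn with | imp h1 h2 =>
        exact (ih2 g w).2 h2 (h ((ih1 g w).1 h1 hs))
  | box φ ih =>
    intro g w
    refine ⟨fun hp h v hv => ?_, fun hn h v hv => ?_⟩
    · cases hp with | box h' => exact (ih g v).1 h' (h v hv)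
    · cases hn with | box h' => exact (ih g v).2 h' (h v hv)
  | dia φ ih =>
    intro g w
    refine ⟨fun hp h => ?_, fun hn h => ?_⟩
    · cases hp with | dia h' =>
        obtain ⟨v, hv, hs⟩ := h; exact ⟨v, hv, (ih g v).1 h' hs⟩
    · cases hn with | dia h' =>
        obtain ⟨v, hv, hs⟩ := h; exact ⟨v, hv, (ih g v).2 h' hs⟩
  | atN i φ ih =>
    intro g w
    refine ⟨fun hp h => ?_, fun hn h => ?_⟩
    · cases hp with | atN h' => exact (ih g _).1 h' h
    · cases hn with | atN h' => exact (ih g _).2 h' h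
  | atS x φ ih =>
    intro g w
    refine ⟨fun hp h => ?_, fun hn h => ?_⟩
    · cases hp with | atS h' => exact (ih g _).1 h' h
    · cases hn with | atS h' => exact (ih g _).2 h' h
  | bind x φ ih =>
    intro g w
    refine ⟨fun hp h => ?_, fun hn h => ?_⟩
    · cases hp with | bind h' => exact (ih _ w).1 h' h
    · cases hn with | bind h' => exact (ih _ w).2 h' h
  | bbox φ ih =>
    intro g w
    refine ⟨fun hp h v hv => ?_, fun hn h v hv => ?_⟩
    · cases hp with | bbox h' => exact (ih g v).1 h' (h v hv)
    · cases hn with | bbox h' => exact (ih g v).2 h' (h v hv)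
  | bdia φ ih =>
    intro g w
    refine ⟨fun hp h => ?_, fun hn h => ?_⟩
    · cases hp with | bdia h' =>
        obtain ⟨v, hv, hs⟩ := h; exact ⟨v, hv, (ih g v).1 h' hs⟩
    · cases hn with | bdia h' =>
        obtain ⟨v, hv, hs⟩ := h; exact ⟨v, hv, (ih g v).2 h' hs⟩
  | glA φ ih =>
    intro g w
    refine ⟨fun hp h v => ?_, fun hn h v => ?_⟩
    · cases hp with | glA h' => exact (ih g v).1 h' (h v)
    · cases hn with | glA h' => exact (ih g v).2 h' (h v)
  | glE φ ih =>
    intro g w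
    refine ⟨fun hp h => ?_, fun hn h => ?_⟩
    · cases hp with | glE h' =>
        obtain ⟨v, hs⟩ := h; exact ⟨v, (ih g v).1 h' hs⟩
    · cases hn with | glE h' =>
        obtain ⟨v, hs⟩ := h; exact ⟨v, (ih g v).2 h' hs⟩
  | sall x φ ih =>
    intro g w
    refine ⟨fun hp h v => ?_, fun hn h v => ?_⟩
    · cases hp with | sall h' => exact (ih _ w).1 h' (h v)
    · cases hn with | sall h' => exact (ih _ w).2 h' (h v)
  | sex x φ ih =>
    intro g w
    refine ⟨fun hp h => ?_, fun hn h => ?_⟩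
    · cases hp with | sex h' =>
        obtain ⟨v, hs⟩ := h; exact ⟨v, (ih _ w).1 h' hs⟩
    · cases hn with | sex h' =>
        obtain ⟨v, hs⟩ := h; exact ⟨v, (ih _ w).2 h' hs⟩
  | _ => intro g w; exact ⟨fun _ h => h, fun _ h => h⟩

theorem monotone_antitone_variable_elimination {W : Type} (R : W → W → Prop)
    (p : ℕ) (α β : Form) (hα : NegIn p α) (hβ : PosIn p β) :
    validIneq R α β ↔ validIneq R (substProp p .bot α) (substProp p .bot β) := by
  constructor
  · intro h Vp Vn g w hs
    rw [sat_substBot] at hs ⊢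
    exact h _ Vn g w hs
  · intro h Vp Vn g w hs
    set Vp' : ℕ → W → Prop := fun q => if q = p then fun _ => False else Vp q with hVp'
    have heq : ∀ q, q ≠ p → Vp' q = Vp q := by
      intro q hq; simp [hVp', hq]
    have hle : ∀ v, Vp' p v → Vp p v := by
      intro v hv; simp [hVp'] at hv
    have h1 : sat ⟨R, Vp', Vn⟩ g w α :=
      (sat_mono R Vp' Vp Vn p heq hle α g w).2 hα hs
    have h2 : sat ⟨R, Vp', Vn⟩ g w β := by
      have := h Vp Vn g w ((sat_substBot R Vp Vn p α g w).2 h1)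
      exact (sat_substBot R Vp Vn p β g w).1 this
    exact (sat_mono R Vp' Vp Vn p heq hle β g w).1 hβ h2
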